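/- Let H = T ᵀ X ᵀ X T be positive definite with T a permutation matrix, let D be the diagonal matrix in the LDL decomposition of H, and let s ∈ ℝ^c. If z ∈ ℤ^c is produced by Babai's nearest plane algorithm applied to the basis B = 𝓧 diag(s) T (where 𝓧ᵀ𝓧 = XᵀX) and target y = 𝓧 w, then ‖X diag(s) z − X w‖² ≤ (1/4) sᵀ T^{−ᵀ} D T⁻¹ s. -/

import Mathlib

open Matrix
open scoped RealInnerProductSpace

/-- Gram–Schmidt orthogonalization of a finite family (the unnormalized
Gram–Schmidt vectors `ãⱼ = aⱼ − Σ_{k<j} (⟪ã_k,aⱼ⟫/‖ã_k‖²) ã_k`). -/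
noncomputable def gramSchmidtFin {n c : ℕ} (a : Fin c → EuclideanSpace ℝ (Fin n)) :
    Fin c → EuclideanSpace ℝ (Fin n) :=
  letI : WellFoundedLT (Fin c) := inferInstance
  InnerProductSpace.gramSchmidt ℝ a


/-- The residual vector of Babai's nearest plane algorithm after `k` steps
(back-to-front: step `k+1` handles index `c-(k+1)`). -/
noncomputable def babaiRes {n c : ℕ} (a gs : Fin c → EuclideanSpace ℝ (Fin n))
    (y : EuclideanSpace ℝ (Fin n)) : ℕ → EuclideanSpace ℝ (Fin n)
  | 0 => y
  | (k+1) =>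
      if h : c - (k+1) < c then
        let i : Fin c := ⟨c - (k+1), h⟩
        let r := babaiRes a gs y k
        r - ((round (⟪gs i, r⟫ / ⟪gs i, a i⟫) : ℤ) : ℝ) • a i
      else babaiRes a gs y k

/-- The integer coefficients output by Babai's nearest plane algorithm. -/
noncomputable def babaiZ {n c : ℕ} (a gs : Fin c → EuclideanSpace ℝ (Fin n))
    (y : EuclideanSpace ℝ (Fin n)) (j : Fin c) : ℤ :=
  round (⟪gs j, babaiRes a gs y (c - 1 - (j : ℕ))⟫ / ⟪gs j, a j⟫)

/-!
Babai's algorithm treats the basis back to front: the step for index `j` subtracts a rounded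
multiple of `b j`, and all later steps subtract vectors `b i` with `i < j`, which are orthogonal to
the Gram–Schmidt vector `b̃ⱼ`. So the final residual `r` satisfies `|⟪b̃ⱼ, r⟫| ≤ ‖b̃ⱼ‖² / 2`, and
as `r` lies in the span of the orthogonal family `b̃`, `‖r‖² ≤ ∑ⱼ ‖b̃ⱼ‖² / 4`.

Gram–Schmidt writes the Gram matrix of `b` as `μ diag(‖b̃ᵢ‖²) μᵀ` with `μ` unit lower triangular.
The Gram matrix is also `diag(s ∘ σ) Tᵀ XᵀX T diag(s ∘ σ)`, which the given LDL factorisation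
turns into another unit-lower-triangular factorisation, with diagonal `dᵢ s(σ i)²`. The diagonal
of such a factorisation is unique, so `‖b̃ᵢ‖² = dᵢ s(σ i)²`. Finally `r = 𝓧 (w - diag(s) z)`, whose
squared norm is the left-hand side because `𝓧ᵀ𝓧 = XᵀX`.
-/

namespace Matrix

section LowerTriangular

variable {ι R : Type*} [Fintype ι] [LinearOrder ι]

theorem IsLowerTriangular.mul_apply_self [NonUnitalNonAssocSemiring R] {A B : Matrix ι ι R}
    (hA : A.IsLowerTriangular) (hB : B.IsLowerTriangular) (i : ι) :
    (A * B) i i = A i i * B i i := by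
  rw [mul_apply, Finset.sum_eq_single i]
  · intro k _ hki
    rcases hki.lt_or_gt with hlt | hgt
    · rw [hB hlt, mul_zero]
    · rw [hA hgt, zero_mul]
  · simp

variable [CommRing R]

theorem IsLowerTriangular.diagonal_mul_mul_diagonal {L : Matrix ι ι R}
    (hL : L.IsLowerTriangular) (u v : ι → R) : (diagonal u * L * diagonal v).IsLowerTriangular :=
  ((blockTriangular_diagonal u).mul hL).mul (blockTriangular_diagonal v)

theorem IsLowerTriangular.inv {L : Matrix ι ι R} (hL : L.IsLowerTriangular) :
    L⁻¹.IsLowerTriangular := by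
  by_cases h : IsUnit L.det
  · have := L.invertibleOfIsUnitDet h
    exact blockTriangular_inv_of_blockTriangular hL
  · rw [nonsing_inv_apply_not_isUnit L h]
    exact blockTriangular_zero

theorem IsLowerTriangular.inv_apply_self_of_diag_eq_one {L : Matrix ι ι R}
    (hL : L.IsLowerTriangular) (hL1 : ∀ i, L i i = 1) (i : ι) : L⁻¹ i i = 1 := by
  have hdet : IsUnit L.det := by simp [det_of_isLowerTriangular L hL, hL1]
  simpa [hL.inv.mul_apply_self hL, hL1, one_apply] using
    congr_fun₂ (nonsing_inv_mul L hdet) i i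

theorem diagonal_unique_of_mul_diagonal_mul_transpose_eq {L₁ L₂ : Matrix ι ι R}
    {d₁ d₂ : ι → R} (hL₁ : L₁.IsLowerTriangular) (hL₁1 : ∀ i, L₁ i i = 1)
    (hL₂ : L₂.IsLowerTriangular) (hL₂1 : ∀ i, L₂ i i = 1)
    (h : L₁ * diagonal d₁ * L₁ᵀ = L₂ * diagonal d₂ * L₂ᵀ) : d₁ = d₂ := by
  have hdet₁ : IsUnit L₁ᵀ.det := by simp [det_of_isLowerTriangular L₁ hL₁, hL₁1]
  have hdet₂ : IsUnit L₂.det := by simp [det_of_isLowerTriangular L₂ hL₂, hL₂1]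
  have key : L₂⁻¹ * L₁ * diagonal d₁ = diagonal d₂ * (L₁⁻¹ * L₂)ᵀ := by
    have := congr_arg (fun M => L₂⁻¹ * M * L₁ᵀ⁻¹) h
    simpa only [Matrix.mul_assoc, mul_nonsing_inv _ hdet₁, nonsing_inv_mul_cancel_left _ _ hdet₂,
      Matrix.mul_one, transpose_mul, transpose_nonsing_inv] using this
  ext i
  simpa only [mul_diagonal, diagonal_mul, transpose_apply, hL₂.inv.mul_apply_self hL₁,
    hL₁.inv.mul_apply_self hL₂, hL₁.inv_apply_self_of_diag_eq_one hL₁1,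
    hL₂.inv_apply_self_of_diag_eq_one hL₂1, hL₁1, hL₂1, one_mul, mul_one]
    using congr_fun₂ key i i

end LowerTriangular

variable {ι : Type*} [Fintype ι] [DecidableEq ι]

theorem diagonal_mul_mul_diagonal_mul_transpose_mul_diagonal {K : Type*} [Field K] {u : ι → K}
    (hu : ∀ i, u i ≠ 0) (L : Matrix ι ι K) (d : ι → K) :
    diagonal u * (L * diagonal d * Lᵀ) * diagonal u =
      (diagonal u * L * diagonal u⁻¹) * diagonal (fun i => d i * u i ^ 2) *
        (diagonal u * L * diagonal u⁻¹)ᵀ := by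
  have hd : diagonal u⁻¹ * diagonal (fun i => d i * u i ^ 2) * diagonal u⁻¹ = diagonal d := by
    rw [diagonal_mul_diagonal, diagonal_mul_diagonal]
    congr 1
    ext i
    have := hu i
    simp only [Pi.inv_apply]
    field_simp
  simp only [transpose_mul, diagonal_transpose, ← hd, Matrix.mul_assoc]

variable {R : Type*} [CommRing R]

theorem permMatrix_mul_diagonal (σ : Equiv.Perm ι) (s : ι → R) :
    σ.permMatrix R * diagonal s = diagonal (s ∘ σ) * σ.permMatrix R := by
  ext i j
  by_cases h : σ i = j <;> simp [h]

theorem inv_permMatrix (σ : Equiv.Perm ι) : (σ.permMatrix R)⁻¹ = (σ⁻¹).permMatrix R :=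
  inv_eq_left_inv (by rw [← permMatrix_mul, mul_inv_cancel, permMatrix_one])

theorem transpose_mul_self_of_mul_diagonal_mul_permMatrix {m : Type*} [Fintype m]
    (A : Matrix m ι R) (s : ι → R) (σ : Equiv.Perm ι) :
    (A * diagonal s * (σ⁻¹).permMatrix R)ᵀ * (A * diagonal s * (σ⁻¹).permMatrix R) =
      diagonal (s ∘ σ) * (((σ⁻¹).permMatrix R)ᵀ * (Aᵀ * A) * (σ⁻¹).permMatrix R) *
        diagonal (s ∘ σ) := by
  have hl : ((σ⁻¹).permMatrix R)ᵀ * diagonal s = diagonal (s ∘ σ) * ((σ⁻¹).permMatrix R)ᵀ := by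
    rw [transpose_permMatrix, inv_inv, permMatrix_mul_diagonal]
  have hr : diagonal s * (σ⁻¹).permMatrix R = (σ⁻¹).permMatrix R * diagonal (s ∘ σ) := by
    simpa using congr_arg transpose hl
  simp only [transpose_mul, diagonal_transpose, Matrix.mul_assoc]
  rw [← Matrix.mul_assoc _ (diagonal s), hl, hr]
  simp only [Matrix.mul_assoc]

end Matrix

section Columns

variable {m ι : Type*} {B : Matrix m ι ℝ} {b : ι → EuclideanSpace ℝ m}

theorem sum_smul_eq_toLp_mulVec [Fintype ι] (hb : ∀ j i, b j i = B i j) (x : ι → ℝ) :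
    ∑ j, x j • b j = WithLp.toLp 2 (B *ᵥ x) := by
  ext i
  simp [mulVec, dotProduct, hb, mul_comm]

theorem gram_eq_transpose_mul [Fintype m] (hb : ∀ j i, b j i = B i j) : gram ℝ b = Bᵀ * B := by
  ext j k
  simp [gram_apply, mul_apply, PiLp.inner_apply, hb, mul_comm]

end Columns

section SumSquares

variable {p q ι : Type*} [Fintype p] [Fintype q] [Fintype ι]

theorem sum_mulVec_sq_eq_dotProduct (M : Matrix p ι ℝ) (v : ι → ℝ) :
    ∑ i, (M *ᵥ v) i ^ 2 = v ⬝ᵥ ((Mᵀ * M) *ᵥ v) := by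
  rw [← mulVec_mulVec, dotProduct_mulVec, vecMul_transpose]
  simp [dotProduct, sq]

theorem sum_mulVec_sq_eq_of_transpose_mul_eq {A : Matrix p ι ℝ} {A' : Matrix q ι ℝ}
    (h : Aᵀ * A = A'ᵀ * A') (v : ι → ℝ) : ∑ i, (A *ᵥ v) i ^ 2 = ∑ i, (A' *ᵥ v) i ^ 2 := by
  rw [sum_mulVec_sq_eq_dotProduct, sum_mulVec_sq_eq_dotProduct, h]

end SumSquares

section Orthogonal

open Submodule Set

variable {ι E : Type*} [Fintype ι] [NormedAddCommGroup E] [InnerProductSpace ℝ E] {v : ι → E}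

theorem inner_sum_smul_right_of_pairwise_orthogonal (hv : Pairwise fun i j => ⟪v i, v j⟫ = 0)
    (α : ι → ℝ) (j : ι) : ⟪v j, ∑ i, α i • v i⟫ = α j * ‖v j‖ ^ 2 := by
  rw [inner_sum, Finset.sum_eq_single j, real_inner_smul_right, real_inner_self_eq_norm_sq]
  · intro i _ hij
    rw [real_inner_smul_right, hv hij.symm, mul_zero]
  · simp

theorem inner_sum_smul_sum_smul_of_pairwise_orthogonal (hv : Pairwise fun i j => ⟪v i, v j⟫ = 0)
    (α β : ι → ℝ) : ⟪∑ i, α i • v i, ∑ i, β i • v i⟫ = ∑ i, α i * β i * ‖v i‖ ^ 2 := by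
  simp_rw [sum_inner, real_inner_smul_left, inner_sum_smul_right_of_pairwise_orthogonal hv,
    mul_assoc]

theorem norm_sq_le_of_abs_inner_le_half (hv : Pairwise fun i j => ⟪v i, v j⟫ = 0) {r : E}
    (hr : r ∈ span ℝ (range v)) (h : ∀ i, |⟪v i, r⟫| ≤ ‖v i‖ ^ 2 / 2) :
    ‖r‖ ^ 2 ≤ ∑ i, ‖v i‖ ^ 2 / 4 := by
  obtain ⟨α, rfl⟩ := (mem_span_range_iff_exists_fun ℝ).1 hr
  rw [← real_inner_self_eq_norm_sq, inner_sum_smul_sum_smul_of_pairwise_orthogonal hv]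
  gcongr with i
  have hi := h i
  rw [inner_sum_smul_right_of_pairwise_orthogonal hv, abs_mul, abs_of_nonneg (sq_nonneg ‖v i‖)]
    at hi
  nlinarith [abs_nonneg (α i), sq_abs (α i), sq_nonneg ‖v i‖]

end Orthogonal

section GramSchmidt

open InnerProductSpace

variable {ι E : Type*} [LinearOrder ι] [LocallyFiniteOrderBot ι] [WellFoundedLT ι]
  [NormedAddCommGroup E] [InnerProductSpace ℝ E] (a : ι → E)

noncomputable def gramSchmidtCoeff : Matrix ι ι ℝ :=
  Matrix.of fun j i =>
    if i < j then ⟪gramSchmidt ℝ a i, a j⟫ / ‖gramSchmidt ℝ a i‖ ^ 2 else if i = j then 1 else 0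

theorem gramSchmidtCoeff_isLowerTriangular : (gramSchmidtCoeff a).IsLowerTriangular :=
  fun j i (hji : j < i) => by simp [gramSchmidtCoeff, hji.not_gt, hji.ne']

theorem gramSchmidtCoeff_apply_self (i : ι) : gramSchmidtCoeff a i i = 1 := by
  simp [gramSchmidtCoeff]

theorem sum_gramSchmidtCoeff_smul [Fintype ι] (j : ι) :
    ∑ i, gramSchmidtCoeff a j i • gramSchmidt ℝ a i = a j := by
  conv_rhs => rw [gramSchmidt_def'' ℝ a j]
  simp only [gramSchmidtCoeff, Matrix.of_apply, ite_smul, one_smul, zero_smul]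
  rw [Finset.sum_ite, Finset.sum_ite_eq', Finset.filter_gt_eq_Iio, add_comm]
  simp

variable [Fintype ι]

theorem inner_gramSchmidt_self (j : ι) : ⟪gramSchmidt ℝ a j, a j⟫ = ‖gramSchmidt ℝ a j‖ ^ 2 := by
  rw [← sum_gramSchmidtCoeff_smul a j,
    inner_sum_smul_right_of_pairwise_orthogonal (gramSchmidt_pairwise_orthogonal ℝ a),
    gramSchmidtCoeff_apply_self, one_mul]

theorem gram_eq_gramSchmidtCoeff_mul_diagonal_mul_transpose :
    gram ℝ a = gramSchmidtCoeff a * diagonal (fun i => ‖gramSchmidt ℝ a i‖ ^ 2) *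
      (gramSchmidtCoeff a)ᵀ := by
  ext j k
  rw [gram_apply, ← sum_gramSchmidtCoeff_smul a j, ← sum_gramSchmidtCoeff_smul a k,
    inner_sum_smul_sum_smul_of_pairwise_orthogonal (gramSchmidt_pairwise_orthogonal ℝ a),
    mul_apply]
  simp only [mul_diagonal, transpose_apply]
  exact Finset.sum_congr rfl fun i _ => by ring

theorem norm_gramSchmidt_sq_eq_of_gram_eq {L : Matrix ι ι ℝ} {d : ι → ℝ}
    (hL : L.IsLowerTriangular) (hL1 : ∀ i, L i i = 1) (h : gram ℝ a = L * diagonal d * Lᵀ)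
    (i : ι) : ‖gramSchmidt ℝ a i‖ ^ 2 = d i := by
  refine congr_fun (diagonal_unique_of_mul_diagonal_mul_transpose_eq
    (d₁ := fun k => ‖gramSchmidt ℝ a k‖ ^ 2)
    (gramSchmidtCoeff_isLowerTriangular a) (gramSchmidtCoeff_apply_self a) hL hL1 ?_) i
  rw [← h, gram_eq_gramSchmidtCoeff_mul_diagonal_mul_transpose]

end GramSchmidt

theorem abs_sub_round_div_mul_le {x N : ℝ} (hN : 0 < N) : |x - round (x / N) * N| ≤ N / 2 := by
  have h : x - round (x / N) * N = (x / N - round (x / N)) * N := by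
    rw [sub_mul, div_mul_cancel₀ x hN.ne']
  rw [h, abs_mul, abs_of_pos hN]
  nlinarith [abs_sub_round (x / N)]

section Babai

open Submodule Set InnerProductSpace

variable {n c : ℕ} (a gs : Fin c → EuclideanSpace ℝ (Fin n)) (y : EuclideanSpace ℝ (Fin n))

theorem babaiRes_succ {k : ℕ} {j : Fin c} (hj : (j : ℕ) = c - (k + 1)) (hk : k < c) :
    babaiRes a gs y (k + 1) = babaiRes a gs y k - (babaiZ a gs y j : ℝ) • a j := by
  have hjk : c - 1 - (j : ℕ) = k := by omega
  obtain ⟨j, hjc⟩ := j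
  obtain rfl : j = c - (k + 1) := hj
  simp only [babaiRes, babaiZ, hjk, dif_pos hjc]

theorem babaiRes_eq_sub_sum_filter {k : ℕ} (hk : k ≤ c) :
    babaiRes a gs y k =
      y - ∑ j ∈ Finset.univ.filter (fun j : Fin c => c - k ≤ j), (babaiZ a gs y j : ℝ) • a j := by
  induction k with
  | zero =>
    rw [Nat.sub_zero, Finset.filter_false_of_mem fun j _ => not_le.2 j.isLt, Finset.sum_empty,
      sub_zero]
    rfl
  | succ k ih =>
    let j : Fin c := ⟨c - (k + 1), by omega⟩
    have hfilter : (Finset.univ.filter fun i : Fin c => c - (k + 1) ≤ (i : ℕ)) =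
        insert j (Finset.univ.filter fun i : Fin c => c - k ≤ (i : ℕ)) := by
      ext i
      simp only [Finset.mem_filter, Finset.mem_univ, true_and, Finset.mem_insert, Fin.ext_iff, j]
      omega
    have hj : j ∉ Finset.univ.filter fun i : Fin c => c - k ≤ (i : ℕ) := by
      simp only [Finset.mem_filter, Finset.mem_univ, true_and, j]
      omega
    rw [babaiRes_succ a gs y (j := j) rfl (by omega), ih (by omega), hfilter, Finset.sum_insert hj]
    abel

theorem babaiRes_eq_sub_sum : babaiRes a gs y c = y - ∑ j, (babaiZ a gs y j : ℝ) • a j := by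
  simp [babaiRes_eq_sub_sum_filter a gs y le_rfl]

theorem abs_inner_gramSchmidtFin_babaiRes_le (j : Fin c) :
    |⟪gramSchmidtFin a j, babaiRes a (gramSchmidtFin a) y c⟫| ≤ ‖gramSchmidtFin a j‖ ^ 2 / 2 := by
  set gs := gramSchmidtFin a
  set z := babaiZ a gs y
  have hlater : ⟪gs j, babaiRes a gs y c⟫ = ⟪gs j, babaiRes a gs y (c - j)⟫ := by
    rw [babaiRes_eq_sub_sum, babaiRes_eq_sub_sum_filter a gs y (Nat.sub_le c j),
      Nat.sub_sub_self j.isLt.le,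
      ← Finset.sum_filter_add_sum_filter_not Finset.univ (fun i : Fin c => (j : ℕ) ≤ i), ← sub_sub,
      inner_sub_right (gs j) (y - _), sub_eq_self, inner_sum]
    refine Finset.sum_eq_zero fun i hi => ?_
    rw [real_inner_smul_right]
    exact mul_eq_zero_of_right _ (gramSchmidt_inv_triangular ℝ a
      (Fin.lt_def.2 (not_le.1 (Finset.mem_filter.1 hi).2)))
  have hstep : babaiRes a gs y (c - j) = babaiRes a gs y (c - 1 - j) - (z j : ℝ) • a j := by
    rw [show c - (j : ℕ) = c - 1 - j + 1 by omega]
    exact babaiRes_succ a gs y (by omega) (by omega)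
  have hN : ⟪gs j, a j⟫ = ‖gs j‖ ^ 2 := inner_gramSchmidt_self a j
  rcases eq_or_ne (gs j) 0 with h0 | h0
  · simp [h0]
  rw [hlater, hstep, inner_sub_right, real_inner_smul_right, hN]
  simp only [z, babaiZ, hN]
  exact abs_sub_round_div_mul_le (by positivity)

theorem norm_babaiRes_sq_le (hy : y ∈ span ℝ (range a)) :
    ‖babaiRes a (gramSchmidtFin a) y c‖ ^ 2 ≤ ∑ j, ‖gramSchmidtFin a j‖ ^ 2 / 4 := by
  refine norm_sq_le_of_abs_inner_le_half (gramSchmidt_pairwise_orthogonal ℝ a) ?_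
    (abs_inner_gramSchmidtFin_babaiRes_le a y)
  rw [gramSchmidtFin, span_gramSchmidt, babaiRes_eq_sub_sum]
  exact sub_mem hy (sum_mem fun j _ => smul_mem _ _ (subset_span (mem_range_self j)))

end Babai

section ScaledPermutedColumns

open Submodule Set

variable {m c : ℕ} {A : Matrix (Fin m) (Fin c) ℝ} {s : Fin c → ℝ} {σ : Equiv.Perm (Fin c)}
  {b : Fin c → EuclideanSpace ℝ (Fin m)}

theorem babaiRes_eq_of_scaled_permuted_columns
    (hb : ∀ j i, b j i = (A * diagonal s * (σ⁻¹).permMatrix ℝ) i j)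
    (gs : Fin c → EuclideanSpace ℝ (Fin m)) {w : Fin c → ℝ} {y : EuclideanSpace ℝ (Fin m)}
    (hy : ∀ i, y i = (A *ᵥ w) i) {z : Fin c → ℤ} (hz : ∀ j, z j = babaiZ b gs y (σ.symm j)) :
    babaiRes b gs y c = WithLp.toLp 2 (A *ᵥ (w - diagonal s *ᵥ fun j => (z j : ℝ))) := by
  have hzσ : (σ⁻¹).permMatrix ℝ *ᵥ (fun j => (babaiZ b gs y j : ℝ)) = fun j => (z j : ℝ) := by
    ext j
    simp [permMatrix_mulVec, hz, Equiv.Perm.inv_def]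
  rw [babaiRes_eq_sub_sum, sum_smul_eq_toLp_mulVec hb, ← mulVec_mulVec, ← mulVec_mulVec, hzσ,
    mulVec_sub]
  ext i
  simp [hy]

theorem toLp_mulVec_mem_span_scaled_permuted_columns
    (hb : ∀ j i, b j i = (A * diagonal s * (σ⁻¹).permMatrix ℝ) i j) (hs : ∀ j, s j ≠ 0)
    (w : Fin c → ℝ) : WithLp.toLp 2 (A *ᵥ w) ∈ span ℝ (range b) := by
  have hsw : diagonal s *ᵥ (fun j => w j / s j) = w := by
    ext j
    simp [mulVec_diagonal, mul_div_cancel₀ _ (hs j)]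
  refine (mem_span_range_iff_exists_fun ℝ).2 ⟨(fun j => w j / s j) ∘ σ, ?_⟩
  rw [sum_smul_eq_toLp_mulVec hb, ← mulVec_mulVec, ← mulVec_mulVec, permMatrix_mulVec]
  simp [Function.comp_def, hsw]

theorem norm_gramSchmidtFin_sq_of_scaled_permuted_columns
    (hb : ∀ j i, b j i = (A * diagonal s * (σ⁻¹).permMatrix ℝ) i j) (hs : ∀ j, s j ≠ 0)
    {L : Matrix (Fin c) (Fin c) ℝ} {d : Fin c → ℝ} (hL : L.IsLowerTriangular)
    (hL1 : ∀ i, L i i = 1)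
    (hLDL : ((σ⁻¹).permMatrix ℝ)ᵀ * (Aᵀ * A) * (σ⁻¹).permMatrix ℝ = L * diagonal d * Lᵀ)
    (i : Fin c) : ‖gramSchmidtFin b i‖ ^ 2 = d i * s (σ i) ^ 2 := by
  have hu : ∀ i, (s ∘ σ) i ≠ 0 := fun i => hs (σ i)
  refine norm_gramSchmidt_sq_eq_of_gram_eq (d := fun i => d i * s (σ i) ^ 2) b
    (hL.diagonal_mul_mul_diagonal (s ∘ σ) (s ∘ σ)⁻¹) (fun i => ?_) ?_ i
  · simp [mul_diagonal, diagonal_mul, hL1, hs (σ i)]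
  · rw [gram_eq_transpose_mul hb, transpose_mul_self_of_mul_diagonal_mul_permMatrix, hLDL,
      diagonal_mul_mul_diagonal_mul_transpose_mul_diagonal hu]
    rfl

end ScaledPermutedColumns

theorem gptq_error_bound_general (n m c : ℕ) (X : Matrix (Fin n) (Fin c) ℝ)
    (𝓧 : Matrix (Fin m) (Fin c) ℝ) (h𝓧 : 𝓧ᵀ * 𝓧 = Xᵀ * X)
    (σ : Equiv.Perm (Fin c)) (T : Matrix (Fin c) (Fin c) ℝ)
    (hT : ∀ j k, T j k = if j = σ k then 1 else 0)
    (s : Fin c → ℝ) (hs : ∀ j, 0 < s j) (w : Fin c → ℝ)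
    (𝓛 : Matrix (Fin c) (Fin c) ℝ) (d : Fin c → ℝ)
    (h𝓛 : ∀ j k : Fin c, j < k → 𝓛 j k = 0) (h𝓛d : ∀ j, 𝓛 j j = 1)
    (hLDL : Tᵀ * (Xᵀ * X) * T = 𝓛 * Matrix.diagonal d * 𝓛ᵀ)
    (b : Fin c → EuclideanSpace ℝ (Fin m))
    (hb : ∀ j i, b j i = (𝓧 * Matrix.diagonal s * T) i j)
    (y : EuclideanSpace ℝ (Fin m)) (hy : ∀ i, y i = (𝓧 *ᵥ w) i)
    (z : Fin c → ℤ)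
    (hz : ∀ j, z j = babaiZ b (gramSchmidtFin b) y (σ.symm j)) :
    ∑ i, (((X * Matrix.diagonal s) *ᵥ (fun j => (z j : ℝ)) - X *ᵥ w) i) ^ 2
      ≤ (1 / 4) * ((T⁻¹ *ᵥ s) ⬝ᵥ (Matrix.diagonal d *ᵥ (T⁻¹ *ᵥ s))) := by
  obtain rfl : T = (σ⁻¹).permMatrix ℝ := by
    ext j k
    simp [hT, Equiv.eq_symm_apply, eq_comm]
  have hs0 : ∀ j, s j ≠ 0 := fun j => (hs j).ne'
  have hy_mem : y ∈ Submodule.span ℝ (Set.range b) :=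
    (PiLp.ext hy : y = WithLp.toLp 2 (𝓧 *ᵥ w)) ▸
      toLp_mulVec_mem_span_scaled_permuted_columns hb hs0 w
  have hnorm := norm_gramSchmidtFin_sq_of_scaled_permuted_columns hb hs0
    (fun j k h => h𝓛 j k h) h𝓛d (h𝓧 ▸ hLDL)
  calc ∑ i, (((X * diagonal s) *ᵥ (fun j => (z j : ℝ)) - X *ᵥ w) i) ^ 2
      = ∑ i, (𝓧 *ᵥ (w - diagonal s *ᵥ fun j => (z j : ℝ))) i ^ 2 := by
        rw [← sum_mulVec_sq_eq_of_transpose_mul_eq h𝓧.symm, mulVec_sub, mulVec_mulVec]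
        exact Finset.sum_congr rfl fun i _ => by simp only [Pi.sub_apply]; ring
    _ = ‖babaiRes b (gramSchmidtFin b) y c‖ ^ 2 := by
        rw [babaiRes_eq_of_scaled_permuted_columns hb _ hy hz, EuclideanSpace.real_norm_sq_eq]
    _ ≤ ∑ i, ‖gramSchmidtFin b i‖ ^ 2 / 4 := norm_babaiRes_sq_le b y hy_mem
    _ = _ := by
        simp only [hnorm, inv_permMatrix, inv_inv, permMatrix_mulVec, dotProduct, mulVec_diagonal,
          Function.comp_apply, Finset.mul_sum]
        exact Finset.sum_congr rfl fun i _ => by ring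

/-- Theorem 4 of the paper: let `H = Tᵀ Xᵀ X T` with `T` a permutation
matrix, `D = diagonal d` the diagonal of the LDL decomposition of `H`, `s` positive
scales.  If `z` is produced by Babai's nearest plane algorithm applied to the basis
`B = 𝓧 diag(s) T` (where `𝓧ᵀ𝓧 = XᵀX`) and target `y = 𝓧 w`, then
`‖X diag(s) z − X w‖² ≤ (1/4) sᵀ T⁻ᵀ D T⁻¹ s`. -/
theorem gptq_error_bound (n m c : ℕ) (X : Matrix (Fin n) (Fin c) ℝ)
    (hX : LinearIndependent ℝ (fun j => fun i => X i j))
    (𝓧 : Matrix (Fin m) (Fin c) ℝ) (h𝓧 : 𝓧ᵀ * 𝓧 = Xᵀ * X)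
    (σ : Equiv.Perm (Fin c)) (T : Matrix (Fin c) (Fin c) ℝ)
    (hT : ∀ j k, T j k = if j = σ k then 1 else 0)
    (s : Fin c → ℝ) (hs : ∀ j, 0 < s j) (w : Fin c → ℝ)
    (𝓛 : Matrix (Fin c) (Fin c) ℝ) (d : Fin c → ℝ)
    (h𝓛 : ∀ j k : Fin c, j < k → 𝓛 j k = 0) (h𝓛d : ∀ j, 𝓛 j j = 1)
    (hLDL : Tᵀ * (Xᵀ * X) * T = 𝓛 * Matrix.diagonal d * 𝓛ᵀ)
    (b : Fin c → EuclideanSpace ℝ (Fin m))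
    (hb : ∀ j i, b j i = (𝓧 * Matrix.diagonal s * T) i j)
    (y : EuclideanSpace ℝ (Fin m)) (hy : ∀ i, y i = (𝓧 *ᵥ w) i)
    (z : Fin c → ℤ)
    (hz : ∀ j, z j = babaiZ b (gramSchmidtFin b) y (σ.symm j)) :
    ∑ i, (((X * Matrix.diagonal s) *ᵥ (fun j => (z j : ℝ)) - X *ᵥ w) i) ^ 2
      ≤ (1 / 4) * ((T⁻¹ *ᵥ s) ⬝ᵥ (Matrix.diagonal d *ᵥ (T⁻¹ *ᵥ s))) :=
  gptq_error_bound_general n m c X 𝓧 h𝓧 σ T hT s hs w 𝓛 d h𝓛 h𝓛d hLDL b hb y hy z hz
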